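/- arXiv:1305.4546 — 3 statements merged into one kernel-verified Lean document; each statement's English description precedes it below -/
import Mathlib

section
/- Every nonempty word w over a linearly ordered alphabet can be written uniquely as a concatenation w = c₁c₂⋯cₙ of associative Lyndon-Shirshov words with c₁ ≤ c₂ ≤ ⋯ ≤ cₙ in the lexicographic order. -/
/-- The lexicographic order used for Lyndon–Shirshov words: the empty word is
greater than any nonempty word, and otherwise words are compared letterwise. -/
def lexGT {X : Type*} [LinearOrder X] : List X → List X → Prop
  | _, [] => False
  | [], _ :: _ => True
  | a :: u, b :: v => b < a ∨ (a = b ∧ lexGT u v)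

/-- `w` is an associative Lyndon–Shirshov word: it is nonempty and greater
than each of its nontrivial rotations. -/
def IsALSW {X : Type*} [LinearOrder X] (w : List X) : Prop :=
  w ≠ [] ∧ ∀ u v : List X, u ≠ [] → v ≠ [] → w = u ++ v → lexGT w (v ++ u)

/-!
In the order `lexGT` a proper prefix is greater than the word, and an ALSW is greater than each
of its proper suffixes.

Existence: prepend the letters one at a time, merging the new first factor `c` with the next
factor `d` as long as `c > d`; this is possible because the concatenation of ALSW's `u > v` is
again an ALSW.

Uniqueness: the first factor `c₁` of a factorization `c₁ ≤ ⋯ ≤ cₙ` is the longest ALSW prefix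
of the word. A longer ALSW prefix `p` ends in a nonempty prefix `s` of some `cᵢ`, and then
`c₁ > p > s ≥ cᵢ ≥ c₁`.
-/

section LexOrder

variable {X : Type*} [LinearOrder X] {u v w : List X}

theorem lexGT_iff_lex : lexGT u v ↔ List.Lex (· > ·) u v := by
  induction u generalizing v with
  | nil => cases v <;> simp [lexGT]
  | cons a u ih => cases v <;> simp [lexGT, List.cons_lex_cons_iff, ih]

theorem lexGT_irrefl (u : List X) : ¬ lexGT u u :=
  fun h => List.lex_irrefl (r := (· > ·)) (lt_irrefl ·) u (lexGT_iff_lex.1 h)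

theorem lexGT_trans (h₁ : lexGT u v) (h₂ : lexGT v w) : lexGT u w :=
  lexGT_iff_lex.2 <| List.lex_trans (fun h h' => lt_trans h' h)
    (lexGT_iff_lex.1 h₁) (lexGT_iff_lex.1 h₂)

theorem lexGT_asymm (h : lexGT u v) : ¬ lexGT v u :=
  fun h' => lexGT_irrefl u (lexGT_trans h h')

theorem lexGT_trichotomy (u v : List X) : lexGT u v ∨ u = v ∨ lexGT v u := by
  simpa only [lexGT_iff_lex] using trichotomous_of (List.Lex (· > ·)) u v

theorem not_lexGT_trans (h₁ : ¬ lexGT u v) (h₂ : ¬ lexGT v w) : ¬ lexGT u w := by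
  intro h
  rcases lexGT_trichotomy u v with h' | rfl | h'
  exacts [h₁ h', h₂ h, h₂ (lexGT_trans h' h)]

theorem lexGT_append_left_iff (w : List X) : lexGT (w ++ u) (w ++ v) ↔ lexGT u v := by
  induction w with
  | nil => rfl
  | cons a w ih => simp [lexGT, ih]

theorem lexGT_append_of_ne_nil (u : List X) (hv : v ≠ []) : lexGT u (u ++ v) := by
  obtain ⟨b, v, rfl⟩ := List.exists_cons_of_ne_nil hv
  simpa using (lexGT_append_left_iff u (u := []) (v := b :: v)).2 trivial

theorem List.IsPrefix.not_lexGT (h : u <+: v) : ¬ lexGT v u := by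
  obtain ⟨t, rfl⟩ := h
  rcases eq_or_ne t [] with rfl | ht
  · simpa using lexGT_irrefl u
  · exact lexGT_asymm (lexGT_append_of_ne_nil u ht)

theorem lexGT_append_append (hu : ¬ u <+: v) (h : lexGT u v) (x y : List X) :
    lexGT (u ++ x) (v ++ y) := by
  induction u generalizing v with
  | nil => exact absurd List.nil_prefix hu
  | cons a u ih =>
    cases v with
    | nil => exact (h : False).elim
    | cons b v =>
      rcases h with h | ⟨rfl, h⟩
      · exact Or.inl h
      · exact Or.inr ⟨rfl, ih (by simpa using hu) h⟩

theorem lexGT_append_append_of_length_lt (hlen : v.length < u.length) (h : lexGT u v)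
    (x y : List X) : lexGT (u ++ x) (v ++ y) :=
  lexGT_append_append (fun hp => hlen.not_ge hp.length_le) h x y

theorem lexGT_of_lexGT_append (hvw : ¬ v <+: w) (h : lexGT w (v ++ u)) : lexGT w v := by
  rcases lexGT_trichotomy w v with h' | rfl | h'
  · exact h'
  · exact absurd List.prefix_rfl hvw
  · exact absurd h (lexGT_asymm (by simpa using lexGT_append_append hvw h' u []))

end LexOrder

section ALSW

variable {X : Type*} [LinearOrder X] {u v w : List X}

theorem isALSW_singleton (a : X) : IsALSW [a] := by
  refine ⟨List.cons_ne_nil a [], fun u v hu hv h => absurd (congrArg List.length h) ?_⟩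
  have := List.length_pos_iff.2 hu
  have := List.length_pos_iff.2 hv
  simp only [List.length_append, List.length_singleton]
  omega

theorem IsALSW.lexGT_of_eq_append (hw : IsALSW w) (hu : u ≠ []) (hv : v ≠ [])
    (h : w = u ++ v) : lexGT w v := by
  have hrot := hw.2 u v hu hv h
  by_cases hvw : v <+: w
  · exfalso
    obtain ⟨s, rfl⟩ := hvw
    have hlen : s.length = u.length := by
      have := congrArg List.length h
      simp only [List.length_append] at this
      omega
    have hs : s ≠ [] := List.ne_nil_of_length_pos (hlen ▸ List.length_pos_iff.2 hu)
    have hsu : lexGT s u := (lexGT_append_left_iff v).1 hrot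
    have hsu_ne : ¬ s <+: u := fun hp => lexGT_irrefl u (hp.eq_of_length hlen ▸ hsu)
    have hrot' : lexGT (u ++ v) (s ++ v) := h ▸ hw.2 v s hv hs rfl
    exact lexGT_asymm hrot' (lexGT_append_append hsu_ne hsu v v)
  · exact lexGT_of_lexGT_append hvw hrot

theorem IsALSW.append_lexGT (hu : IsALSW u) (hv : IsALSW v) (huv : lexGT u v) :
    lexGT (u ++ v) v := by
  by_cases hp : u <+: v
  · obtain ⟨r, rfl⟩ := hp
    have hr : r ≠ [] := by
      rintro rfl
      exact lexGT_irrefl u (by simpa using huv)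
    exact (lexGT_append_left_iff u).2 (hv.lexGT_of_eq_append hu.1 hr rfl)
  · simpa using lexGT_append_append hp huv v []

theorem IsALSW.append (hu : IsALSW u) (hv : IsALSW v) (huv : lexGT u v) :
    IsALSW (u ++ v) := by
  have hlen_u := List.length_pos_iff.2 hu.1
  have suffix_of_v : ∀ p t s, v = p ++ t → t ≠ [] → lexGT (u ++ v) (t ++ s) := by
    intro p t s hvpt ht
    have huvt : lexGT (u ++ v) t := by
      rcases eq_or_ne p [] with rfl | hp
      · simpa [hvpt] using hu.append_lexGT hv huv
      · exact lexGT_trans (hu.append_lexGT hv huv) (hv.lexGT_of_eq_append hp ht hvpt)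
    have hlen : t.length < (u ++ v).length := by
      simp only [List.length_append, hvpt]
      omega
    simpa using lexGT_append_append_of_length_lt hlen huvt [] s
  refine ⟨by simp [hu.1], fun s t hs ht hst => ?_⟩
  rcases List.append_eq_append_iff.1 hst with ⟨p, rfl, hvp⟩ | ⟨m, rfl, rfl⟩
  · exact suffix_of_v p t _ hvp ht
  · rcases eq_or_ne m [] with rfl | hm
    · simpa using suffix_of_v [] v s rfl hv.1
    · have hlen : m.length < (s ++ m).length := by simpa using List.length_pos_iff.2 hs
      simpa using
        lexGT_append_append_of_length_lt hlen (hu.lexGT_of_eq_append hs hm rfl) v (v ++ s)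

end ALSW

theorem List.exists_mem_isPrefix_isSuffix_of_isPrefix_flatten {α : Type*} {t : List α}
    {ds : List (List α)} (ht : t ≠ []) (h : t <+: ds.flatten) :
    ∃ e ∈ ds, ∃ s ≠ [], s <+: e ∧ s <:+ t := by
  induction ds generalizing t with
  | nil => exact absurd (List.prefix_nil.1 h) ht
  | cons e ds ih =>
    rcases le_or_gt t.length e.length with hte | het
    · exact ⟨e, List.mem_cons_self, t, ht,
        List.prefix_of_prefix_length_le h (List.prefix_append e _) hte, List.suffix_refl t⟩
    · obtain ⟨t', rfl⟩ := List.prefix_of_prefix_length_le (List.prefix_append e _) h het.le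
      have ht' : t' ≠ [] := by
        rintro rfl
        simp at het
      obtain ⟨e', he', s, hs, hse', hst'⟩ := ih ht' ((List.prefix_append_right_inj e).1 h)
      exact ⟨e', List.mem_cons_of_mem e he', s, hs, hse', hst'.trans (List.suffix_append e t')⟩

section Factorization

variable {X : Type*} [LinearOrder X]

def IsALSWFactorization (cs : List (List X)) : Prop :=
  (∀ c ∈ cs, IsALSW c) ∧ cs.IsChain (fun a b => ¬ lexGT a b)

theorem IsALSWFactorization.nil : IsALSWFactorization ([] : List (List X)) :=
  ⟨by simp, List.IsChain.nil⟩

theorem IsALSWFactorization.tail {c : List X} {cs : List (List X)}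
    (h : IsALSWFactorization (c :: cs)) : IsALSWFactorization cs :=
  ⟨fun d hd => h.1 d (List.mem_cons_of_mem c hd), h.2.tail⟩

theorem exists_isALSWFactorization_flatten_eq_append {c : List X} (hc : IsALSW c)
    {ds : List (List X)} (hds : IsALSWFactorization ds) :
    ∃ es, IsALSWFactorization es ∧ es.flatten = c ++ ds.flatten := by
  induction ds generalizing c with
  | nil => exact ⟨[c], ⟨by simpa using hc, List.isChain_singleton c⟩, by simp⟩
  | cons d ds ih =>
    by_cases hcd : lexGT c d
    · obtain ⟨es, hes, hflat⟩ := ih (hc.append (hds.1 d List.mem_cons_self) hcd) hds.tail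
      exact ⟨es, hes, by simp [hflat]⟩
    · refine ⟨c :: d :: ds, ⟨?_, List.isChain_cons_cons.2 ⟨hcd, hds.2⟩⟩, rfl⟩
      simpa [hc] using hds.1

theorem exists_isALSWFactorization (w : List X) :
    ∃ cs, IsALSWFactorization cs ∧ cs.flatten = w := by
  induction w with
  | nil => exact ⟨[], .nil, rfl⟩
  | cons a w ih =>
    obtain ⟨cs, hcs, rfl⟩ := ih
    exact exists_isALSWFactorization_flatten_eq_append (isALSW_singleton a) hcs

theorem IsALSWFactorization.not_lexGT_of_mem {d : List X} {ds : List (List X)}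
    (h : IsALSWFactorization (d :: ds)) {e : List X} (he : e ∈ ds) : ¬ lexGT d e :=
  have : Trans (fun a b : List X => ¬ lexGT a b) (fun a b => ¬ lexGT a b)
      (fun a b => ¬ lexGT a b) := ⟨not_lexGT_trans⟩
  List.rel_of_pairwise_cons h.2.pairwise he

theorem IsALSWFactorization.length_le_of_isPrefix {d p : List X} {ds : List (List X)}
    (h : IsALSWFactorization (d :: ds)) (hp : IsALSW p) (hpd : p <+: (d :: ds).flatten) :
    p.length ≤ d.length := by
  by_contra! hlen
  obtain ⟨t, rfl⟩ : d <+: p :=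
    List.prefix_of_prefix_length_le (List.prefix_append d _) hpd hlen.le
  have ht : t ≠ [] := by
    rintro rfl
    simp at hlen
  obtain ⟨e, he, s, hs, hse, t₀, rfl⟩ := List.exists_mem_isPrefix_isSuffix_of_isPrefix_flatten ht
    ((List.prefix_append_right_inj d).1 hpd)
  have hps : lexGT (d ++ (t₀ ++ s)) s :=
    hp.lexGT_of_eq_append (u := d ++ t₀) (by simp [h.1 d List.mem_cons_self |>.1]) hs (by simp)
  have hdp : lexGT d (d ++ (t₀ ++ s)) := lexGT_append_of_ne_nil d ht
  exact not_lexGT_trans (h.not_lexGT_of_mem he) hse.not_lexGT (lexGT_trans hdp hps)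

theorem IsALSWFactorization.eq_of_flatten_eq {cs ds : List (List X)}
    (hcs : IsALSWFactorization cs) (hds : IsALSWFactorization ds)
    (h : cs.flatten = ds.flatten) : cs = ds := by
  induction cs generalizing ds with
  | nil =>
    cases ds with
    | nil => rfl
    | cons d ds => simp [(hds.1 d List.mem_cons_self).1] at h
  | cons c cs ih =>
    cases ds with
    | nil => simp [(hcs.1 c List.mem_cons_self).1] at h
    | cons d ds =>
      have hc : c <+: (c :: cs).flatten := List.prefix_append c _
      have hd : d <+: (c :: cs).flatten := h ▸ List.prefix_append d _
      have hdc : d.length ≤ c.length :=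
        hcs.length_le_of_isPrefix (hds.1 d List.mem_cons_self) hd
      have hcd : c.length ≤ d.length :=
        hds.length_le_of_isPrefix (hcs.1 c List.mem_cons_self) (h ▸ hc)
      obtain rfl : c = d := (List.prefix_of_prefix_length_le hc hd hcd).eq_of_length
        (le_antisymm hcd hdc)
      rw [ih hcs.tail hds.tail (by simpa using h)]

end Factorization

theorem lyndon_factorization_existsUnique_general {X : Type*} [LinearOrder X]
    (w : List X) :
    ∃! cs : List (List X),
      (∀ c ∈ cs, IsALSW c) ∧ List.Chain' (fun a b => ¬ lexGT a b) cs ∧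
        cs.flatten = w := by
  obtain ⟨cs, hcs, rfl⟩ := exists_isALSWFactorization w
  refine ⟨cs, ⟨hcs.1, hcs.2, rfl⟩, ?_⟩
  rintro ds ⟨hds, hchain, hflat⟩
  exact IsALSWFactorization.eq_of_flatten_eq ⟨hds, hchain⟩ hcs hflat

/-- Chen–Fox–Lyndon factorization: every nonempty word is uniquely a
concatenation `c₁c₂⋯cₙ` of ALSW's with `c₁ ≤ c₂ ≤ ⋯ ≤ cₙ` lexicographically. -/
theorem lyndon_factorization_existsUnique {X : Type*} [LinearOrder X]
    (w : List X) (hw : w ≠ []) :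
    ∃! cs : List (List X),
      (∀ c ∈ cs, IsALSW c) ∧ List.Chain' (fun a b => ¬ lexGT a b) cs ∧
        cs.flatten = w :=
  lyndon_factorization_existsUnique_general w
end

section
/- In the Drinfeld–Kohno Lie algebra L_n, the ℤ-submodule A_i spanned by all Lie monomials in the generators {t_{ij} : i < j ≤ n−1} with fixed first index i is closed under bracketing with any generator t_{kl} with k ≥ i; consequently A_i is an ideal of the subalgebra generated by {t_{kl} : i ≤ k < l ≤ n−1}. -/
/-- Index set for the generators `t_{ij}`, `1 ≤ i < j ≤ n-1`, of the
Drinfeld–Kohno Lie algebra `L_n` (0-indexed as pairs in `Fin (n-1)`). -/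
abbrev DKIdx (n : ℕ) := {p : Fin (n - 1) × Fin (n - 1) // p.1 < p.2}

/-- The generator `t_{ij} = t_{ji}` of the free Lie algebra, for distinct `i, j`
(and `0` when `i = j`). -/
noncomputable def dkT (n : ℕ) (i j : Fin (n - 1)) : FreeLieAlgebra ℤ (DKIdx n) :=
  if h : i < j then FreeLieAlgebra.of ℤ (⟨(i, j), h⟩ : DKIdx n)
  else if h' : j < i then FreeLieAlgebra.of ℤ (⟨(j, i), h'⟩ : DKIdx n)
  else 0

/-- The defining relations of the Drinfeld–Kohno Lie algebra:
`⁅t_{ij}, t_{kl}⁆ = 0` for distinct `i,j,k,l` and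
`⁅t_{ij}, t_{ik} + t_{jk}⁆ = 0` for distinct `i,j,k`. -/
def dkRels (n : ℕ) : Set (FreeLieAlgebra ℤ (DKIdx n)) :=
  {p | ∃ i j k l : Fin (n - 1), i ≠ j ∧ i ≠ k ∧ i ≠ l ∧ j ≠ k ∧ j ≠ l ∧ k ≠ l ∧
        p = ⁅dkT n i j, dkT n k l⁆} ∪
  {p | ∃ i j k : Fin (n - 1), i ≠ j ∧ i ≠ k ∧ j ≠ k ∧
        p = ⁅dkT n i j, dkT n i k + dkT n j k⁆}

/-- The Lie ideal generated by the Drinfeld–Kohno relations. -/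
noncomputable def dkIdeal (n : ℕ) : LieIdeal ℤ (FreeLieAlgebra ℤ (DKIdx n)) :=
  LieSubmodule.lieSpan ℤ _ (dkRels n)

/-- The Drinfeld–Kohno Lie algebra `L_n` over `ℤ`. -/
abbrev DK (n : ℕ) := FreeLieAlgebra ℤ (DKIdx n) ⧸ dkIdeal n

/-- The image of the generator `t_{ij}` in `L_n`. -/
noncomputable def dkt (n : ℕ) (i j : Fin (n - 1)) : DK n :=
  LieSubmodule.Quotient.mk (N := dkIdeal n) (dkT n i j)

/-- The Lie subalgebra `A_i` of the Drinfeld–Kohno Lie algebra generated by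
the generators `t_{ij}` with fixed first index `i` (`i < j ≤ n-1`). -/
noncomputable def dkA (n : ℕ) (i : Fin (n - 1)) : LieSubalgebra ℤ (DK n) :=
  LieSubalgebra.lieSpan ℤ _ {x | ∃ j : Fin (n - 1), i < j ∧ x = dkt n i j}

/-!
The bracket with a generator `t_{kl}`, `i ≤ k < l`, sends each generator `t_{ij}` of `A_i` into
`A_i`: for `k = i` it is a bracket of two generators, if `{k, l}` and `{i, j}` are disjoint it
vanishes, and if `j ∈ {k, l}`, with `p` the other index, the relation
`⁅t_{ij}, t_{ip} + t_{jp}⁆ = 0` turns it into `⁅t_{ij}, t_{ip}⁆`. Since `ad t_{kl}` is a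
derivation, this is enough for `t_{kl}` to normalize `A_i`, and the normalizer of `A_i` is a
subalgebra.
-/

namespace LieSubalgebra

variable {R L : Type*} [CommRing R] [LieRing L] [LieAlgebra R L]

theorem mem_normalizer_lieSpan {s : Set L} {x : L} (h : ∀ y ∈ s, ⁅x, y⁆ ∈ lieSpan R L s) :
    x ∈ (lieSpan R L s).normalizer := by
  rw [mem_normalizer_iff]
  intro y hy
  induction hy using lieSpan_induction with
  | mem y hy => exact h y hy
  | zero => simp
  | add y z _ _ hy hz => rw [lie_add]; exact add_mem hy hz
  | smul c y _ hy => rw [lie_smul]; exact (lieSpan R L s).smul_mem c hy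
  | lie y z hy hz ihy ihz =>
    rw [leibniz_lie]
    exact add_mem (lie_mem _ ihy hz) (lie_mem _ hy ihz)

end LieSubalgebra

section DrinfeldKohno

variable {n : ℕ}

theorem dkT_comm (i j : Fin (n - 1)) : dkT n i j = dkT n j i := by
  unfold dkT
  rcases lt_trichotomy i j with h | rfl | h
  · rw [dif_pos h, dif_neg h.not_gt, dif_pos h]
  · rfl
  · rw [dif_neg h.not_gt, dif_pos h, dif_pos h]

theorem dkt_comm (i j : Fin (n - 1)) : dkt n i j = dkt n j i := by
  rw [dkt, dkt, dkT_comm]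

theorem dkIdeal_mk_eq_zero {p : FreeLieAlgebra ℤ (DKIdx n)} (hp : p ∈ dkRels n) :
    (LieSubmodule.Quotient.mk p : DK n) = 0 :=
  LieSubmodule.Quotient.mk_eq_zero'.mpr (LieSubmodule.subset_lieSpan hp)

theorem lie_dkt_eq_zero {i j k l : Fin (n - 1)} (hij : i ≠ j) (hik : i ≠ k) (hil : i ≠ l)
    (hjk : j ≠ k) (hjl : j ≠ l) (hkl : k ≠ l) : ⁅dkt n i j, dkt n k l⁆ = 0 := by
  rw [dkt, dkt, ← LieSubmodule.Quotient.mk_bracket]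
  exact dkIdeal_mk_eq_zero (Or.inl ⟨i, j, k, l, hij, hik, hil, hjk, hjl, hkl, rfl⟩)

theorem lie_dkt_add_dkt_eq_zero {i j k : Fin (n - 1)} (hij : i ≠ j) (hik : i ≠ k)
    (hjk : j ≠ k) : ⁅dkt n i j, dkt n i k + dkt n j k⁆ = 0 := by
  rw [dkt, dkt, dkt, ← Submodule.Quotient.mk_add, ← LieSubmodule.Quotient.mk_bracket]
  exact dkIdeal_mk_eq_zero (Or.inr ⟨i, j, k, hij, hik, hjk, rfl⟩)

theorem lie_dkt_dkt_eq {i j k : Fin (n - 1)} (hij : i ≠ j) (hik : i ≠ k) (hjk : j ≠ k) :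
    ⁅dkt n j k, dkt n i j⁆ = ⁅dkt n i j, dkt n i k⁆ := by
  have h := lie_dkt_add_dkt_eq_zero (n := n) hij hik hjk
  rw [lie_add] at h
  rw [← lie_skew]
  exact neg_eq_of_add_eq_zero_left h

theorem dkt_mem_dkA {i j : Fin (n - 1)} (hij : i < j) : dkt n i j ∈ dkA n i :=
  LieSubalgebra.subset_lieSpan ⟨j, hij, rfl⟩

theorem lie_dkt_mem_dkA {i j k l : Fin (n - 1)} (hik : i ≤ k) (hkl : k < l) (hij : i < j) :
    ⁅dkt n k l, dkt n i j⁆ ∈ dkA n i := by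
  rcases hik.eq_or_lt with rfl | hik
  · exact (dkA n i).lie_mem (dkt_mem_dkA hkl) (dkt_mem_dkA hij)
  by_cases hjk : j = k
  · subst hjk
    rw [lie_dkt_dkt_eq hij.ne (hij.trans hkl).ne hkl.ne]
    exact (dkA n i).lie_mem (dkt_mem_dkA hij) (dkt_mem_dkA (hij.trans hkl))
  by_cases hjl : j = l
  · subst hjl
    rw [dkt_comm k j, lie_dkt_dkt_eq hij.ne hik.ne hjk]
    exact (dkA n i).lie_mem (dkt_mem_dkA hij) (dkt_mem_dkA hik)
  rw [lie_dkt_eq_zero hkl.ne hik.ne' (Ne.symm hjk) (hik.trans hkl).ne' (Ne.symm hjl) hij.ne]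
  exact (dkA n i).zero_mem

theorem dkt_mem_normalizer_dkA {i k l : Fin (n - 1)} (hik : i ≤ k) (hkl : k < l) :
    dkt n k l ∈ (dkA n i).normalizer :=
  LieSubalgebra.mem_normalizer_lieSpan <| by
    rintro _ ⟨j, hij, rfl⟩
    exact lie_dkt_mem_dkA hik hkl hij

end DrinfeldKohno

theorem dkA_ideal_general (n : ℕ) (i : Fin (n - 1)) :
    (∀ k l : Fin (n - 1), i ≤ k → k < l → ∀ a ∈ dkA n i, ⁅dkt n k l, a⁆ ∈ dkA n i) ∧
    (∀ x ∈ LieSubalgebra.lieSpan ℤ (DK n)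
        {x | ∃ k l : Fin (n - 1), i ≤ k ∧ k < l ∧ x = dkt n k l},
      ∀ a ∈ dkA n i, ⁅x, a⁆ ∈ dkA n i) := by
  refine ⟨fun k l hik hkl ↦ ((dkA n i).mem_normalizer_iff _).mp (dkt_mem_normalizer_dkA hik hkl),
    fun x hx ↦ ((dkA n i).mem_normalizer_iff x).mp ?_⟩
  refine LieSubalgebra.lieSpan_le.mpr ?_ hx
  rintro _ ⟨k, l, hik, hkl, rfl⟩
  exact dkt_mem_normalizer_dkA hik hkl

/-- `A_i` is closed under bracketing with any generator `t_{kl}` with `i ≤ k < l`;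
consequently `A_i` is an ideal of the subalgebra generated by
`{t_{kl} : i ≤ k < l ≤ n-1}`. -/
theorem dkA_ideal (n : ℕ) (hn : 2 < n) (i : Fin (n - 1)) :
    (∀ k l : Fin (n - 1), i ≤ k → k < l → ∀ a ∈ dkA n i, ⁅dkt n k l, a⁆ ∈ dkA n i) ∧
    (∀ x ∈ LieSubalgebra.lieSpan ℤ (DK n)
        {x | ∃ k l : Fin (n - 1), i ≤ k ∧ k < l ∧ x = dkt n k l},
      ∀ a ∈ dkA n i, ⁅x, a⁆ ∈ dkA n i) :=
  dkA_ideal_general n i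
end

section
/- In the Kukin Lie algebra A_P, if two words u, v ∈ {x,y}* are equal in the semigroup P, then ⌊z u⌋ = ⌊z v⌋ in A_P. -/
/-- Generators of the Kukin Lie algebra: `x, x̂, y, ŷ, z`. -/
inductive KGen : Type
  | x | xh | y | yh | z
  deriving DecidableEq

/-- Letters of the semigroup alphabet `{x, y}`, encoded by `Bool`
(`false ↦ x`, `true ↦ y`); words are lists of letters. -/
noncomputable def letterF (k : Type*) [Field k] : Bool → FreeLieAlgebra k KGen
  | false => FreeLieAlgebra.of k KGen.x
  | true  => FreeLieAlgebra.of k KGen.y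

/-- The hatted generator corresponding to a letter. -/
noncomputable def hatF (k : Type*) [Field k] : Bool → FreeLieAlgebra k KGen
  | false => FreeLieAlgebra.of k KGen.xh
  | true  => FreeLieAlgebra.of k KGen.yh

/-- The left-normed bracketing `⌊z w⌋ = [[…[[z,w₁],w₂],…],w_m]` of an element
with the letters of a word. -/
def lnb {L : Type*} [LieRing L] (f : Bool → L) : L → List Bool → L
  | z, [] => z
  | z, a :: w => lnb f ⁅z, f a⁆ w

/-- The defining relations of the Kukin Lie algebra `A_P` for a semigroup
presentation `P = ⟨x, y ∣ uᵢ = vᵢ (i ∈ I)⟩`: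
`[x̂,x] = [x̂,y] = [ŷ,x] = [ŷ,y] = 0`, `[x̂,z] = -[z,x]`, `[ŷ,z] = -[z,y]`, and
`⌊z uᵢ⌋ = ⌊z vᵢ⌋` for all `i`. -/
def kukinRels (k : Type*) [Field k] {I : Type*} (rel : I → List Bool × List Bool) :
    Set (FreeLieAlgebra k KGen) :=
  { ⁅FreeLieAlgebra.of k KGen.xh, FreeLieAlgebra.of k KGen.x⁆,
    ⁅FreeLieAlgebra.of k KGen.xh, FreeLieAlgebra.of k KGen.y⁆,
    ⁅FreeLieAlgebra.of k KGen.yh, FreeLieAlgebra.of k KGen.x⁆,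
    ⁅FreeLieAlgebra.of k KGen.yh, FreeLieAlgebra.of k KGen.y⁆,
    ⁅FreeLieAlgebra.of k KGen.xh, FreeLieAlgebra.of k KGen.z⁆ +
      ⁅FreeLieAlgebra.of k KGen.z, FreeLieAlgebra.of k KGen.x⁆,
    ⁅FreeLieAlgebra.of k KGen.yh, FreeLieAlgebra.of k KGen.z⁆ +
      ⁅FreeLieAlgebra.of k KGen.z, FreeLieAlgebra.of k KGen.y⁆ } ∪
  { p | ∃ i : I, p = lnb (letterF k) (FreeLieAlgebra.of k KGen.z) (rel i).1 -
                  lnb (letterF k) (FreeLieAlgebra.of k KGen.z) (rel i).2 }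

/-- The Lie ideal generated by the Kukin relations. -/
noncomputable def kukinIdeal (k : Type*) [Field k] {I : Type*}
    (rel : I → List Bool × List Bool) : LieIdeal k (FreeLieAlgebra k KGen) :=
  LieSubmodule.lieSpan k _ (kukinRels k rel)

/-- The Kukin Lie algebra `A_P`. -/
abbrev KukinAlg (k : Type*) [Field k] {I : Type*} (rel : I → List Bool × List Bool) :=
  FreeLieAlgebra k KGen ⧸ kukinIdeal k rel

/-- The canonical image of an element of the free Lie algebra in `A_P`. -/
noncomputable def kmk (k : Type*) [Field k] {I : Type*} (rel : I → List Bool × List Bool)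
    (a : FreeLieAlgebra k KGen) : KukinAlg k rel :=
  LieSubmodule.Quotient.mk (N := kukinIdeal k rel) a

/-- The congruence on the free semigroup `{x,y}⁺` generated by the defining
pairs `(uᵢ, vᵢ)`: `SemigroupEq rel u v` means `u = v` holds in the semigroup
`P = ⟨x, y ∣ uᵢ = vᵢ (i ∈ I)⟩`. -/
inductive SemigroupEq {I : Type*} (rel : I → List Bool × List Bool) :
    List Bool → List Bool → Prop
  | rel (a b : List Bool) (i : I) :
      SemigroupEq rel (a ++ (rel i).1 ++ b) (a ++ (rel i).2 ++ b)
  | refl (u : List Bool) : SemigroupEq rel u u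
  | symm {u v : List Bool} : SemigroupEq rel u v → SemigroupEq rel v u
  | trans {u v w : List Bool} :
      SemigroupEq rel u v → SemigroupEq rel v w → SemigroupEq rel u w

/-!
The pairs `(u, v)` with `⌊z u⌋ = ⌊z v⌋` form an equivalence relation containing the defining
relations, so it suffices to see that it is a congruence. Compatibility with appending on the
right is immediate from left-normed bracketing. For prepending a letter `a`, the relations make
`â` commute with `x` and `y` and act on `z` as `-ad a`, so `⌊z (a w)⌋ = -[â, ⌊z w⌋]`: prepending
is an operation on the value `⌊z w⌋` itself.
-/

section LeftNormed

variable {L : Type*} [LieRing L]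

theorem lnb_append (f : Bool → L) (z : L) (w₁ w₂ : List Bool) :
    lnb f z (w₁ ++ w₂) = lnb f (lnb f z w₁) w₂ := by
  induction w₁ generalizing z with
  | nil => rfl
  | cons a w ih => simp only [List.cons_append, lnb, ih]

theorem lnb_neg (f : Bool → L) (z : L) (w : List Bool) :
    lnb f (-z) w = -lnb f z w := by
  induction w generalizing z with
  | nil => rfl
  | cons a w ih => simp only [lnb, neg_lie, ih]

theorem lnb_map {L' : Type*} [LieRing L'] (g : L → L') (hg : ∀ a b, g ⁅a, b⁆ = ⁅g a, g b⁆)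
    (f : Bool → L) (z : L) (w : List Bool) :
    g (lnb f z w) = lnb (g ∘ f) (g z) w := by
  induction w generalizing z with
  | nil => rfl
  | cons a w ih => simp only [lnb, ih, hg, Function.comp_apply]

variable {φ ψ : Bool → L} {Z : L}

theorem lie_lnb_of_lie_eq_zero (h0 : ∀ b c, ⁅ψ b, φ c⁆ = 0) (b : Bool) (c : L)
    (w : List Bool) : ⁅ψ b, lnb φ c w⁆ = lnb φ ⁅ψ b, c⁆ w := by
  induction w generalizing c with
  | nil => rfl
  | cons a w ih => rw [lnb, ih, leibniz_lie, h0, lie_zero, add_zero, lnb]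

theorem lnb_cons_eq_neg_lie (h0 : ∀ b c, ⁅ψ b, φ c⁆ = 0) (hZ : ∀ b, ⁅ψ b, Z⁆ = -⁅Z, φ b⁆)
    (b : Bool) (w : List Bool) :
    lnb φ Z (b :: w) = -⁅ψ b, lnb φ Z w⁆ := by
  rw [lie_lnb_of_lie_eq_zero h0, hZ, lnb_neg, neg_neg, lnb]

theorem lnb_append_left_congr (h0 : ∀ b c, ⁅ψ b, φ c⁆ = 0) (hZ : ∀ b, ⁅ψ b, Z⁆ = -⁅Z, φ b⁆)
    (a : List Bool) {u v : List Bool} (h : lnb φ Z u = lnb φ Z v) :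
    lnb φ Z (a ++ u) = lnb φ Z (a ++ v) := by
  induction a with
  | nil => exact h
  | cons c a ih =>
    rw [List.cons_append, List.cons_append, lnb_cons_eq_neg_lie h0 hZ,
      lnb_cons_eq_neg_lie h0 hZ, ih]

theorem lnb_eq_of_semigroupEq {I : Type*} {rel : I → List Bool × List Bool}
    (h0 : ∀ b c, ⁅ψ b, φ c⁆ = 0) (hZ : ∀ b, ⁅ψ b, Z⁆ = -⁅Z, φ b⁆)
    (hrel : ∀ i, lnb φ Z (rel i).1 = lnb φ Z (rel i).2) {u v : List Bool}
    (h : SemigroupEq rel u v) : lnb φ Z u = lnb φ Z v := by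
  induction h with
  | rel a b i =>
    rw [lnb_append, lnb_append_left_congr h0 hZ a (hrel i), ← lnb_append]
  | refl u => rfl
  | symm _ ih => exact ih.symm
  | trans _ _ ih₁ ih₂ => exact ih₁.trans ih₂

end LeftNormed

section Kukin

variable (k : Type*) [Field k] {I : Type*} (rel : I → List Bool × List Bool)

theorem kmk_lie (a b : FreeLieAlgebra k KGen) :
    kmk k rel ⁅a, b⁆ = ⁅kmk k rel a, kmk k rel b⁆ :=
  rfl

theorem kmk_eq_zero_of_mem_kukinRels {r : FreeLieAlgebra k KGen} (hr : r ∈ kukinRels k rel) :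
    kmk k rel r = 0 :=
  LieSubmodule.Quotient.mk_eq_zero'.mpr (LieSubmodule.subset_lieSpan hr)

theorem kmk_hatF_lie_letterF (b c : Bool) :
    ⁅kmk k rel (hatF k b), kmk k rel (letterF k c)⁆ = 0 := by
  rw [← kmk_lie]
  apply kmk_eq_zero_of_mem_kukinRels
  cases b <;> cases c <;> simp [kukinRels, letterF, hatF]

theorem kmk_hatF_lie_z (b : Bool) :
    ⁅kmk k rel (hatF k b), kmk k rel (FreeLieAlgebra.of k KGen.z)⁆ =
      -⁅kmk k rel (FreeLieAlgebra.of k KGen.z), kmk k rel (letterF k b)⁆ := by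
  refine eq_neg_of_add_eq_zero_left (kmk_eq_zero_of_mem_kukinRels k rel
    (r := ⁅hatF k b, FreeLieAlgebra.of k KGen.z⁆ + ⁅FreeLieAlgebra.of k KGen.z, letterF k b⁆) ?_)
  cases b <;> simp [kukinRels, letterF, hatF]

theorem kmk_lnb_rel (i : I) :
    kmk k rel (lnb (letterF k) (FreeLieAlgebra.of k KGen.z) (rel i).1) =
      kmk k rel (lnb (letterF k) (FreeLieAlgebra.of k KGen.z) (rel i).2) := by
  rw [← sub_eq_zero]
  exact kmk_eq_zero_of_mem_kukinRels k rel (Set.mem_union_right _ ⟨i, rfl⟩)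

end Kukin

theorem kukin_of_semigroupEq_general (k : Type*) [Field k] {I : Type*}
    (rel : I → List Bool × List Bool)
    (u v : List Bool) (h : SemigroupEq rel u v) :
    kmk k rel (lnb (letterF k) (FreeLieAlgebra.of k KGen.z) u) =
      kmk k rel (lnb (letterF k) (FreeLieAlgebra.of k KGen.z) v) := by
  have hrel := kmk_lnb_rel k rel
  simp only [lnb_map _ (kmk_lie k rel)] at hrel ⊢
  exact lnb_eq_of_semigroupEq (ψ := kmk k rel ∘ hatF k)
    (kmk_hatF_lie_letterF k rel) (kmk_hatF_lie_z k rel) hrel h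

/-- If `u = v` in the semigroup `P`, then `⌊z u⌋ = ⌊z v⌋` in the Kukin Lie
algebra `A_P`. -/
theorem kukin_of_semigroupEq (k : Type*) [Field k] {I : Type*}
    (rel : I → List Bool × List Bool)
    (hrel : ∀ i : I, (rel i).1 ≠ [] ∧ (rel i).2 ≠ [])
    (u v : List Bool) (h : SemigroupEq rel u v) :
    kmk k rel (lnb (letterF k) (FreeLieAlgebra.of k KGen.z) u) =
      kmk k rel (lnb (letterF k) (FreeLieAlgebra.of k KGen.z) v) :=
  kukin_of_semigroupEq_general k rel u v h
end
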